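/- Let M be a monotonic machine and let s be a sequence of length L ≥ 1 covering a state V of the transformed machine S(M). Then the prefix s[1,L−1] covers parent(V; s_L), where s_L is the last symbol of s. -/
import Mathlib


open scoped Classical

/-- A machine over alphabet `σ` with states in `Q`: a set of labeled edges together with a
designated initial state. (Being a DAG with the initial state a source is expressed by the
predicates `Machine.Acyclic` and `Machine.InitSource`.) -/
structure Machine (σ : Type) (Q : Type) where
  edges : Finset (Q × σ × Q)
  init : Q

namespace Machine

variable {σ Q : Type}

/-- There is an edge labeled `a` from `w` to `v`. -/
def IsEdge (M : Machine σ Q) (w : Q) (a : σ) (v : Q) : Prop := (w, a, v) ∈ M.edges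

/-- `w` is a parent of `v`. -/
def IsParent (M : Machine σ Q) (w v : Q) : Prop := ∃ a, M.IsEdge w a v

/-- The machine is acyclic (a DAG). -/
def Acyclic (M : Machine σ Q) : Prop :=
  ∀ v, ¬ Relation.TransGen M.IsParent v v

/-- The initial state is a source: it has no incoming edges. -/
def InitSource (M : Machine σ Q) : Prop := ∀ w a, ¬ M.IsEdge w a M.init

/-- `u` is a strict ancestor of `v`. -/
def StrictAncestor (M : Machine σ Q) : Q → Q → Prop := Relation.TransGen M.IsParent

/-- `M.Reach v t`: `t` is the sequence of edge labels along a directed path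
from the initial state to `v`. -/
inductive Reach (M : Machine σ Q) : Q → List σ → Prop
  | init : Reach M M.init []
  | step {w v : Q} {a : σ} {t : List σ} : Reach M w t → M.IsEdge w a v → Reach M v (t ++ [a])

/-- A sequence `s` covers a state `v` if some (not necessarily contiguous) subsequence of
`s` is the label sequence of a directed path from the initial state to `v`. -/
def CoversState (M : Machine σ Q) (s : List σ) (v : Q) : Prop :=
  ∃ t : List σ, M.Reach v t ∧ t.Sublist s

/-- `M` is monotonic: every sequence covering a state covers each parent of that state. -/
def Monotonic (M : Machine σ Q) : Prop :=
  ∀ v w a, M.IsEdge w a v → ∀ s : List σ, M.CoversState s v → M.CoversState s w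

/-- `M` is simple: for every state, the labels of its incoming edges are pairwise
distinct. -/
def Simple (M : Machine σ Q) : Prop :=
  ∀ v a w₁ w₂, M.IsEdge w₁ a v → M.IsEdge w₂ a v → w₁ = w₂

end Machine

namespace Machine

variable {σ Q : Type}

/-- `sub(V;a)`: the set of states from which an edge labeled `a` enters a member of `V`. -/
noncomputable def subSet [Fintype Q] (M : Machine σ Q) (V : Finset Q) (a : σ) : Finset Q :=
  Finset.univ.filter (fun w => ∃ v ∈ V, M.IsEdge w a v)

/-- `inc(V)`: the set of labels of all edges entering members of `V`. -/
noncomputable def inc (M : Machine σ Q) (V : Finset Q) : Finset σ :=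
  (M.edges.filter (fun e => e.2.2 ∈ V)).image (fun e => e.2.1)

/-- `parent(V;a)`: the elements of `sub(V;a) ∪ V` having no strict ancestor inside
`sub(V;a) ∪ V`. -/
noncomputable def parentSet [Fintype Q] (M : Machine σ Q) (V : Finset Q) (a : σ) :
    Finset Q :=
  (M.subSet V a ∪ V).filter (fun w => ∀ u ∈ M.subSet V a ∪ V, ¬ M.StrictAncestor u w)

/-- The transformed machine `S(M)` (on the state space of all sets of states of `M`):
for each set `V` and each `a ∈ inc(V)` there is an edge labeled `a` from `parent(V;a)`
to `V`; the initial state is `{i}`. -/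
noncomputable def SMachine [Fintype σ] [Fintype Q] (M : Machine σ Q) :
    Machine σ (Finset Q) where
  init := {M.init}
  edges := Finset.univ.filter (fun e : Finset Q × σ × Finset Q =>
    e.2.1 ∈ M.inc e.2.2 ∧ e.1 = M.parentSet e.2.2 e.2.1)

/-- `M.InClosure V U` holds iff `U ∈ closure(V)`, where
`closure(V) = {V} ∪ ⋃_{a ∈ inc(V)} closure(parent(V;a))`. -/
inductive InClosure [Fintype Q] (M : Machine σ Q) : Finset Q → Finset Q → Prop
  | refl (V : Finset Q) : InClosure M V V
  | step {V U : Finset Q} {a : σ} : a ∈ M.inc V → InClosure M (M.parentSet V a) U →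
      InClosure M V U

/-- The states of the transformed machine `S(M)`: the union of `closure({v})` over all
states `v` of `M`. -/
def SStates [Fintype Q] (M : Machine σ Q) : Set (Finset Q) :=
  {U | ∃ v : Q, M.InClosure {v} U}

end Machine

/-- The contiguous sub-window `s[i,j]` (1-based, inclusive). -/
def window {α : Type} (s : List α) (i j : ℕ) : List α := (s.take j).drop (i - 1)


section Aux

namespace Machine

variable {σ Q : Type}

lemma covers_of_reflTransGen {M : Machine σ Q} (hmono : M.Monotonic)
    {s : List σ} {v w : Q} (h : Relation.ReflTransGen M.IsParent w v)
    (hc : M.CoversState s v) : M.CoversState s w := by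
  induction h using Relation.ReflTransGen.head_induction_on with
  | refl => exact hc
  | head hp _ ih =>
    obtain ⟨a, ha⟩ := hp
    exact hmono _ _ _ ha _ ih

lemma strictAncestor_wf {M : Machine σ Q} [Fintype Q] (hacyc : M.Acyclic) :
    WellFounded M.StrictAncestor := by
  have h1 : IsTrans Q M.StrictAncestor := ⟨fun _ _ _ => Relation.TransGen.trans⟩
  have h2 : IsIrrefl Q M.StrictAncestor := ⟨hacyc⟩
  exact Finite.wellFounded_of_trans_of_irrefl _

lemma exists_minimal_ancestor {M : Machine σ Q} [Fintype Q] (hacyc : M.Acyclic)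
    (S : Finset Q) {x : Q} (hx : x ∈ S) :
    ∃ w ∈ S, (∀ z ∈ S, ¬ M.StrictAncestor z w) ∧ Relation.ReflTransGen M.IsParent w x := by
  have hwf := strictAncestor_wf hacyc
  obtain ⟨w, hw, hmin⟩ := hwf.has_min
    {y | y ∈ S ∧ Relation.ReflTransGen M.IsParent y x} ⟨x, hx, Relation.ReflTransGen.refl⟩
  refine ⟨w, hw.1, fun z hz hza => ?_, hw.2⟩
  exact hmin z ⟨hz, hza.to_reflTransGen.trans hw.2⟩ hza

lemma reach_of_reflTransGen {M : Machine σ Q} {z x : Q}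
    (h : Relation.ReflTransGen M.IsParent z x) (hz : ∃ t, M.Reach z t) :
    ∃ t, M.Reach x t := by
  induction h with
  | refl => exact hz
  | tail _ hp ih =>
    obtain ⟨a, e⟩ := hp
    obtain ⟨t, ht⟩ := ih
    exact ⟨t ++ [a], ht.step e⟩

lemma init_reflTransGen_of_reach {M : Machine σ Q} {x : Q} {t : List σ}
    (h : M.Reach x t) : Relation.ReflTransGen M.IsParent M.init x := by
  induction h with
  | init => exact Relation.ReflTransGen.refl
  | step _ e ih => exact ih.tail ⟨_, e⟩

lemma mem_subSet {M : Machine σ Q} [Fintype Q] {V : Finset Q} {a : σ} {w : Q} :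
    w ∈ M.subSet V a ↔ ∃ v ∈ V, M.IsEdge w a v := by
  simp [subSet]

lemma mem_parentSet {M : Machine σ Q} [Fintype Q] {V : Finset Q} {a : σ} {w : Q} :
    w ∈ M.parentSet V a ↔
      w ∈ M.subSet V a ∪ V ∧ ∀ u ∈ M.subSet V a ∪ V, ¬ M.StrictAncestor u w := by
  simp [parentSet]

lemma inc_of_edge {M : Machine σ Q} {V : Finset Q} {w v : Q} {a : σ}
    (e : M.IsEdge w a v) (hv : v ∈ V) : a ∈ M.inc V :=
  Finset.mem_image.mpr ⟨(w, a, v), Finset.mem_filter.mpr ⟨e, hv⟩, rfl⟩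

lemma sEdge {M : Machine σ Q} [Fintype σ] [Fintype Q] {U : Finset Q} {a : σ}
    (h : a ∈ M.inc U) : (SMachine M).IsEdge (M.parentSet U a) a U :=
  Finset.mem_filter.mpr ⟨Finset.mem_univ _, ⟨h, rfl⟩⟩

lemma sEdge_decode {M : Machine σ Q} [Fintype σ] [Fintype Q] {W U : Finset Q} {a : σ}
    (h : (SMachine M).IsEdge W a U) : a ∈ M.inc U ∧ W = M.parentSet U a :=
  (Finset.mem_filter.mp h).2

lemma reach_concat {M : Machine σ Q} {v : Q} {q : List σ} {b : σ}
    (h : M.Reach v (q ++ [b])) : ∃ y, M.Reach y q ∧ M.IsEdge y b v := by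
  generalize hq : q ++ [b] = r at h
  cases h with
  | init => simp at hq
  | step hy e =>
    obtain ⟨rfl, h2⟩ := List.append_inj' hq rfl
    obtain rfl : b = _ := by simpa using h2
    exact ⟨_, hy, e⟩

/-- An antichain of reachable states containing the initial state is `{init}`. -/
lemma eq_singleton_init {M : Machine σ Q} {U : Finset Q}
    (hanti : ∀ z ∈ U, ∀ z' ∈ U, ¬ M.StrictAncestor z z')
    (hcov : ∀ z ∈ U, ∃ q, M.Reach z q) (hu : M.init ∈ U) : U = {M.init} := by
  apply Finset.eq_singleton_iff_unique_mem.mpr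
  refine ⟨hu, fun x hx => ?_⟩
  by_contra hne
  obtain ⟨q, hq⟩ := hcov x hx
  rcases Relation.reflTransGen_iff_eq_or_transGen.mp (init_reflTransGen_of_reach hq)
    with h | h
  · exact hne h
  · exact hanti _ hu _ hx h

/-- Lemma G': along a path of `S(M)`, all states of the target set are reachable
in `M`, and some state of the target set has a path that embeds in the labels. -/
lemma sreach_spec {M : Machine σ Q} [Fintype σ] [Fintype Q]
    (hacyc : M.Acyclic) (hmono : M.Monotonic) {V : Finset Q} {t : List σ}
    (h : (SMachine M).Reach V t) :
    (∀ v ∈ V, ∃ q, M.Reach v q) ∧ ∃ v ∈ V, ∃ r, M.Reach v r ∧ r.Sublist t := by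
  induction h with
  | init =>
    have hinit : (SMachine M).init = ({M.init} : Finset Q) := rfl
    constructor
    · intro v hv
      rw [hinit, Finset.mem_singleton] at hv
      exact ⟨[], hv ▸ Machine.Reach.init⟩
    · exact ⟨M.init, by rw [hinit]; exact Finset.mem_singleton_self _,
        [], Machine.Reach.init, List.nil_sublist _⟩
  | step h e ih =>
    obtain ⟨ha, hU⟩ := sEdge_decode e
    subst hU
    constructor
    · intro v hv
      obtain ⟨w, hwS, hmin, hrtg⟩ := exists_minimal_ancestor hacyc
        (M.subSet _ _ ∪ _) (Finset.mem_union_right _ hv)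
      exact reach_of_reflTransGen hrtg (ih.1 w (mem_parentSet.mpr ⟨hwS, hmin⟩))
    · obtain ⟨u, hu, r₀, hr₀, hsub⟩ := ih.2
      rcases Finset.mem_union.mp (mem_parentSet.mp hu).1 with hus | huV
      · obtain ⟨v₀, hv₀, e₀⟩ := mem_subSet.mp hus
        exact ⟨v₀, hv₀, r₀ ++ [_], hr₀.step e₀, hsub.append (List.Sublist.refl _)⟩
      · exact ⟨u, huV, r₀, hr₀, hsub.trans (List.sublist_append_left _ _)⟩

/-- Helper for Lemma E. -/
lemma covers_parentSet_elem {M : Machine σ Q} [Fintype Q]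
    (hacyc : M.Acyclic) (hmono : M.Monotonic) {V : Finset Q} {b : σ} {x : Q} {s' : List σ}
    (hx : x ∈ M.subSet V b ∪ V) (hc : ∃ r, M.Reach x r ∧ r.Sublist s') :
    ∃ w ∈ M.parentSet V b, ∃ r₂, M.Reach w r₂ ∧ r₂.Sublist s' := by
  obtain ⟨w, hwS, hmin, hrtg⟩ := exists_minimal_ancestor hacyc _ hx
  exact ⟨w, mem_parentSet.mpr ⟨hwS, hmin⟩, covers_of_reflTransGen hmono hrtg hc⟩

/-- Lemma E: if `v ∈ V` has a path embedding in `s' ++ [b]`, then some element of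
`parent(V;b)` has a path embedding in `s'`. -/
lemma prefix_covers_parentSet_elem {M : Machine σ Q} [Fintype Q]
    (hacyc : M.Acyclic) (hmono : M.Monotonic) {V : Finset Q} {b : σ} {v : Q}
    {r s' : List σ} (hv : v ∈ V) (hr : M.Reach v r) (hsub : r.Sublist (s' ++ [b])) :
    ∃ w ∈ M.parentSet V b, ∃ r₂, M.Reach w r₂ ∧ r₂.Sublist s' := by
  obtain ⟨l₁, l₂, rfl, h₁, h₂⟩ := List.sublist_append_iff.mp hsub
  rcases List.sublist_singleton.mp h₂ with rfl | rfl
  · rw [List.append_nil] at hr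
    exact covers_parentSet_elem hacyc hmono (Finset.mem_union_right _ hv) ⟨l₁, hr, h₁⟩
  · obtain ⟨y, hy, e⟩ := reach_concat hr
    exact covers_parentSet_elem hacyc hmono
      (Finset.mem_union_left _ (mem_subSet.mpr ⟨v, hv, e⟩)) ⟨l₁, hy, h₁⟩

/-- Lemma F: if `U` is an antichain all of whose elements are reachable in `M`, and some
element of `U` has a path embedding in `s`, then `s` covers `U` in `S(M)`. -/
lemma covers_sstate_of_elem {M : Machine σ Q} [Fintype σ] [Fintype Q]
    (hacyc : M.Acyclic) (hmono : M.Monotonic) :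
    ∀ (n : ℕ) (r : List σ) (U : Finset Q) (u : Q) (s : List σ), r.length ≤ n →
      (∀ z ∈ U, ∀ z' ∈ U, ¬ M.StrictAncestor z z') →
      (∀ z ∈ U, ∃ q, M.Reach z q) →
      u ∈ U → M.Reach u r → r.Sublist s →
      (SMachine M).CoversState s U := by
  intro n
  induction n with
  | zero =>
    intro r U u s hlen hanti hcov hu hr hsub
    obtain rfl : r = [] := List.length_eq_zero_iff.mp (Nat.le_zero.mp hlen)
    obtain rfl : u = M.init := by
      generalize hq : ([] : List σ) = r' at hr
      cases hr with
      | init => rfl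
      | step h e => simp at hq
    rw [eq_singleton_init hanti hcov hu]
    exact ⟨[], Machine.Reach.init, List.nil_sublist _⟩
  | succ n ih =>
    intro r U u s hlen hanti hcov hu hr hsub
    by_cases hUeq : U = {M.init}
    · rw [hUeq]
      exact ⟨[], Machine.Reach.init, List.nil_sublist _⟩
    · have hune : u ≠ M.init := by
        rintro rfl
        exact hUeq (eq_singleton_init hanti hcov hu)
      cases hr with
      | init => exact absurd rfl hune
      | step hy e =>
        rename_i y c r'
        have hcU : c ∈ M.inc U := inc_of_edge e hu
        have hyS : y ∈ M.subSet U c := mem_subSet.mpr ⟨u, hu, e⟩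
        obtain ⟨u₂, hS, hmin, hrtg⟩ := exists_minimal_ancestor hacyc
          (M.subSet U c ∪ U) (Finset.mem_union_left _ hyS)
        have hu₂ : u₂ ∈ M.parentSet U c := mem_parentSet.mpr ⟨hS, hmin⟩
        obtain ⟨r₂, hr₂, hr₂sub⟩ :=
          covers_of_reflTransGen hmono hrtg ⟨r', hy, List.Sublist.refl _⟩
        obtain ⟨s₁, s₂, rfl, h₁, h₂⟩ := List.append_sublist_iff.mp hsub
        have hanti₂ : ∀ z ∈ M.parentSet U c, ∀ z' ∈ M.parentSet U c,
            ¬ M.StrictAncestor z z' := fun z hz z' hz' =>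
          (mem_parentSet.mp hz').2 z (mem_parentSet.mp hz).1
        have hcov₂ : ∀ z ∈ M.parentSet U c, ∃ q, M.Reach z q := by
          intro z hz
          rcases Finset.mem_union.mp (mem_parentSet.mp hz).1 with hzs | hzU
          · obtain ⟨u₃, hu₃, e₃⟩ := mem_subSet.mp hzs
            obtain ⟨q, hq⟩ := hcov u₃ hu₃
            obtain ⟨p, hp, _⟩ := hmono _ _ _ e₃ q ⟨q, hq, List.Sublist.refl _⟩
            exact ⟨p, hp⟩
          · exact hcov z hzU
        have hlen₂ : r₂.length ≤ n := by
          have h3 := hr₂sub.length_le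
          have hl : r'.length + 1 ≤ n + 1 := by simpa using hlen
          omega
        obtain ⟨T, hT, hTsub⟩ :=
          ih r₂ (M.parentSet U c) u₂ s₁ hlen₂ hanti₂ hcov₂ hu₂ hr₂ (hr₂sub.trans h₁)
        exact ⟨T ++ [c], hT.step (sEdge hcU), hTsub.append h₂⟩

end Machine

end Aux

/-- if a sequence `s` of length `L ≥ 1` covers a state `V` of `S(M)`
(`M` monotonic), then the prefix `s[1,L−1]` covers `parent(V; s_L)`. -/
theorem SMachine_prefix_covers_parent {σ Q : Type} [Fintype σ] [Fintype Q]
    (M : Machine σ Q) (hacyc : M.Acyclic) (hsrc : M.InitSource) (hmono : M.Monotonic)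
    (V : Finset Q) (hV : V ∈ Machine.SStates M)
    (s : List σ) (hs : s ≠ [])
    (hcov : (Machine.SMachine M).CoversState s V) :
    (Machine.SMachine M).CoversState (window s 1 (s.length - 1))
      (M.parentSet V (s.getLast hs)) := by
  classical
  have hw : window s 1 (s.length - 1) = s.dropLast := by
    simp [window, List.dropLast_eq_take]
  rw [hw]
  set b := s.getLast hs with hb
  have hsplit : s.dropLast ++ [b] = s := List.dropLast_append_getLast hs
  obtain ⟨t, ht, htsub⟩ := hcov
  have hspec := Machine.sreach_spec hacyc hmono ht
  obtain ⟨v, hv, r, hr, hrt⟩ := hspec.2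
  have hrs : r.Sublist (s.dropLast ++ [b]) := by
    rw [hsplit]; exact hrt.trans htsub
  obtain ⟨w, hwP, r₂, hwr, hwsub⟩ :=
    Machine.prefix_covers_parentSet_elem hacyc hmono hv hr hrs
  have hanti : ∀ z ∈ M.parentSet V b, ∀ z' ∈ M.parentSet V b,
      ¬ M.StrictAncestor z z' := fun z hz z' hz' =>
    (Machine.mem_parentSet.mp hz').2 z (Machine.mem_parentSet.mp hz).1
  have hcov' : ∀ z ∈ M.parentSet V b, ∃ q, M.Reach z q := by
    intro z hz
    rcases Finset.mem_union.mp (Machine.mem_parentSet.mp hz).1 with hzs | hzV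
    · obtain ⟨u₃, hu₃, e₃⟩ := Machine.mem_subSet.mp hzs
      obtain ⟨q, hq⟩ := hspec.1 u₃ hu₃
      obtain ⟨p, hp, _⟩ := hmono _ _ _ e₃ q ⟨q, hq, List.Sublist.refl _⟩
      exact ⟨p, hp⟩
    · exact hspec.1 z hzV
  exact Machine.covers_sstate_of_elem hacyc hmono r₂.length r₂ (M.parentSet V b) w
    s.dropLast le_rfl hanti hcov' hwP hwr hwsub
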